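/- arXiv:1801.01542 — 2 statements merged into one kernel-verified Lean document; each statement's English description precedes it below -/
import Mathlib

section
/- For every prime q and natural number a ≥ 1, and for every n with (q-1) | n (and, if q = 2, additionally requiring n = 1 or n even in case a ≥ 2), we have S_n(q^a) ≡ φ(q^a) (mod q^a) while S_n(q^(a+1)) ≡ 0 (mod q^a); in particular S_n(q^a) ≢ S_n(q^(a+1)) (mod q^a). -/
/-!
Cut `1, …, k m` into `k` blocks of length `m`. When `m² = 0`, expanding `(a m + j)ⁿ` to first
order gives `S_n(k m) = k S_n(m) + n m S_{n-1}(m) (0 + 1 + ⋯ + (k - 1))`. Modulo `m` this is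
`k S_n(m)`. For `k = q`, `m = q^b`, `b ≥ 1` it is `q S_n(q^b)` modulo `q^(b+1)`: the correction
term is divisible by `q^(b+1)` since `q ∣ q (q - 1) / 2` for odd `q`, while for `q = 2` either
`n` is even or `n = 1` and `S_0(2^b) = 2^b`. As `φ(q^(b+1)) = q φ(q^b)`, induction from Fermat's
little theorem `S_n(q) ≡ q - 1 (mod q)` gives `S_n(q^a) ≡ φ(q^a) (mod q^a)`, hence
`S_n(q^(a+1)) ≡ q φ(q^a) = q^a (q - 1) ≡ 0 (mod q^a)`, and `0 < φ(q^a) < q^a`.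
-/

def S (n m : ℕ) : ℕ := ∑ i ∈ Finset.Icc 1 m, i ^ n

open Finset
open scoped Nat

theorem sum_range_mul_eq_sum_blocks {M : Type*} [AddCommMonoid M] (f : ℕ → M) (k m : ℕ) :
    ∑ i ∈ range (k * m), f i = ∑ a ∈ range k, ∑ j ∈ range m, f (a * m + j) := by
  induction k with
  | zero => simp
  | succ k ih => rw [Nat.succ_mul, sum_range_add, ih, sum_range_succ]

theorem add_pow_of_sq_eq_zero {R : Type*} [CommSemiring R] (x y : R) (hy : y ^ 2 = 0) (n : ℕ) :
    (x + y) ^ n = x ^ n + n * x ^ (n - 1) * y := by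
  simpa [Polynomial.derivative_X_pow] using
    Polynomial.eval_add_of_sq_eq_zero (Polynomial.X ^ n) x y hy

theorem S_eq_sum_range (n m : ℕ) : S n m = ∑ i ∈ range m, (i + 1) ^ n := by
  rw [S, range_eq_Ico, sum_Ico_add' (fun i => i ^ n)]
  rfl

theorem cast_S_mul {R : Type*} [CommSemiring R] (n k m : ℕ) (hm : (m : R) ^ 2 = 0) :
    (S n (k * m) : R) = k * S n m + n * m * S (n - 1) m * ∑ a ∈ range k, (a : R) := by
  have block (a j : ℕ) : ((a * m + (j + 1) : ℕ) : R) ^ n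
      = ((j + 1 : ℕ) : R) ^ n + n * m * ((j + 1 : ℕ) : R) ^ (n - 1) * a := by
    rw [Nat.cast_add, add_comm, add_pow_of_sq_eq_zero _ _ (by simp [mul_pow, hm])]
    push_cast; ring
  simp only [S_eq_sum_range, Nat.cast_sum, sum_range_mul_eq_sum_blocks, Nat.cast_pow, add_assoc,
    block, sum_add_distrib, sum_const, card_range, nsmul_eq_mul, mul_sum, sum_mul]

theorem S_mul_modEq (n k m : ℕ) : S n (k * m) ≡ k * S n m [MOD m] := by
  rw [← ZMod.natCast_eq_natCast_iff, cast_S_mul n k m (by simp)]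
  simp

theorem prime_dvd_mul_S_pred_mul_sum_range {p b n : ℕ} (hp : p.Prime) (hb : 1 ≤ b)
    (h2 : p = 2 → n = 1 ∨ Even n) : p ∣ n * S (n - 1) (p ^ b) * ∑ a ∈ range p, a := by
  rcases hp.eq_two_or_odd' with rfl | hodd
  · rcases h2 rfl with rfl | ⟨t, rfl⟩
    · have h : 2 ∣ S 0 (2 ^ b) := by simp [S, dvd_pow_self 2 (by omega : b ≠ 0)]
      exact (h.mul_left 1).mul_right _
    · exact ((Dvd.intro t (by ring)).mul_right _).mul_right _
  · refine Dvd.dvd.mul_left ?_ _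
    have h : p ∣ (∑ a ∈ range p, a) * 2 := sum_range_id_mul_two p ▸ dvd_mul_right p _
    exact hodd.coprime_two_right.dvd_of_dvd_mul_right h

theorem S_prime_pow_succ_modEq {p b n : ℕ} (hp : p.Prime) (hb : 1 ≤ b)
    (h2 : p = 2 → n = 1 ∨ Even n) :
    S n (p ^ (b + 1)) ≡ p * S n (p ^ b) [MOD p ^ (b + 1)] := by
  have hsq : ((p ^ b : ℕ) : ZMod (p ^ (b + 1))) ^ 2 = 0 := by
    rw [← Nat.cast_pow, ZMod.natCast_eq_zero_iff, ← pow_mul]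
    exact pow_dvd_pow p (by omega)
  have hcorr :
      ((n * p ^ b * S (n - 1) (p ^ b) * ∑ a ∈ range p, a : ℕ) : ZMod (p ^ (b + 1))) = 0 := by
    rw [ZMod.natCast_eq_zero_iff, pow_succ,
      show n * p ^ b * S (n - 1) (p ^ b) * ∑ a ∈ range p, a
        = p ^ b * (n * S (n - 1) (p ^ b) * ∑ a ∈ range p, a) by ring]
    exact mul_dvd_mul_left _ (prime_dvd_mul_S_pred_mul_sum_range hp hb h2)
  have hS := cast_S_mul n p (p ^ b) hsq
  rw [← pow_succ'] at hS
  rw [← ZMod.natCast_eq_natCast_iff, hS]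
  push_cast at hcorr ⊢
  rw [hcorr, add_zero]

theorem S_prime_modEq_sub_one {p n : ℕ} (hp : p.Prime) (hn : n ≠ 0) (hd : p - 1 ∣ n) :
    S n p ≡ p - 1 [MOD p] := by
  have := Fact.mk hp
  have hunit : ∀ i ∈ range (p - 1), ((i : ZMod p) + 1) ^ n = 1 := by
    intro i hi
    obtain ⟨k, rfl⟩ := hd
    have hne : ((i + 1 : ℕ) : ZMod p) ≠ 0 := by
      rw [Ne, ZMod.natCast_eq_zero_iff]
      exact Nat.not_dvd_of_pos_of_lt i.succ_pos (by simp at hi; omega)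
    push_cast at hne
    rw [pow_mul, ZMod.pow_card_sub_one_eq_one hne, one_pow]
  have hsplit : S n p = ∑ i ∈ range (p - 1), (i + 1) ^ n + p ^ n := by
    rw [S_eq_sum_range]
    simpa only [Nat.sub_add_cancel hp.one_le] using sum_range_succ (fun i => (i + 1) ^ n) (p - 1)
  rw [← ZMod.natCast_eq_natCast_iff, hsplit]
  simp only [Nat.cast_add, Nat.cast_sum, Nat.cast_pow, Nat.cast_one, ZMod.natCast_self, zero_pow hn,
    add_zero, sum_congr rfl hunit, sum_const, card_range, nsmul_one]

theorem S_prime_pow_modEq_totient {p n a : ℕ} (hp : p.Prime) (hn : n ≠ 0) (hd : p - 1 ∣ n)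
    (ha : 1 ≤ a) (h2 : p = 2 → 2 ≤ a → n = 1 ∨ Even n) :
    S n (p ^ a) ≡ φ (p ^ a) [MOD p ^ a] := by
  induction a, ha using Nat.le_induction with
  | base => simpa [Nat.totient_prime hp] using S_prime_modEq_sub_one hp hn hd
  | succ b hb ih =>
    have h2' : p = 2 → n = 1 ∨ Even n := fun h => h2 h (by omega)
    calc S n (p ^ (b + 1)) ≡ p * S n (p ^ b) [MOD p ^ (b + 1)] :=
          S_prime_pow_succ_modEq hp hb h2'
      _ ≡ p * φ (p ^ b) [MOD p ^ (b + 1)] := by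
        rw [pow_succ']
        exact (ih fun h _ => h2' h).mul_left' p
      _ = φ (p ^ (b + 1)) := by
        rw [pow_succ', Nat.totient_mul_of_prime_of_dvd hp (dvd_pow_self p (by omega))]

theorem totient_not_modEq_zero {m : ℕ} (hm : 1 < m) : ¬ φ m ≡ 0 [MOD m] := fun h =>
  (Nat.totient_pos.mpr (by omega)).ne'
    (Nat.eq_zero_of_dvd_of_lt (Nat.modEq_zero_iff_dvd.mp h) (Nat.totient_lt m hm))

theorem stmt9 (q a n : ℕ) (hq : q.Prime) (ha : 1 ≤ a) (hn : 1 ≤ n)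
    (hd : q - 1 ∣ n) (h2 : q = 2 → 2 ≤ a → n = 1 ∨ Even n) :
    S n (q ^ a) ≡ Nat.totient (q ^ a) [MOD q ^ a] ∧
    S n (q ^ (a + 1)) ≡ 0 [MOD q ^ a] ∧
    ¬ S n (q ^ a) ≡ S n (q ^ (a + 1)) [MOD q ^ a] := by
  have hS := S_prime_pow_modEq_totient hq (by omega) hd ha h2
  have hS_succ : S n (q ^ (a + 1)) ≡ 0 [MOD q ^ a] :=
    calc S n (q ^ (a + 1)) = S n (q * q ^ a) := by rw [pow_succ']
      _ ≡ q * S n (q ^ a) [MOD q ^ a] := S_mul_modEq n q (q ^ a)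
      _ ≡ q * φ (q ^ a) [MOD q ^ a] := hS.mul_left q
      _ = q ^ a * (q - 1) := by
        rw [← Nat.totient_mul_of_prime_of_dvd hq (dvd_pow_self q (by omega)), ← pow_succ',
          Nat.totient_prime_pow_succ hq]
      _ ≡ 0 [MOD q ^ a] := Nat.modEq_zero_iff_dvd.mpr (dvd_mul_right _ _)
  exact ⟨hS, hS_succ, fun h => totient_not_modEq_zero (Nat.one_lt_pow (by omega) hq.one_lt)
    (hS.symm.trans (h.trans hS_succ))⟩
end

section
/- Let q be an odd prime, a ≥ 1, and n ≥ 1 with (q-1) ∤ n and q^(a-1) | n. Then the sequence (S_n(m) mod q^a)_{m≥1} is periodic with exact period q: S_n(m + q) ≡ S_n(m) (mod q^a) for all m ≥ 1, and S_n(q) ≢ S_n(1) (mod q^a). -/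
open Finset

theorem Nat.ModEq.pow_of_prime_pow_dvd {p k n x y : ℕ} (hn : p ^ k ∣ n) (h : x ≡ y [MOD p]) :
    x ^ n ≡ y ^ n [MOD p ^ (k + 1)] := by
  obtain ⟨m, rfl⟩ := hn
  simp only [pow_mul]
  refine Nat.ModEq.pow m ?_
  rw [Nat.modEq_iff_dvd] at h ⊢
  push_cast
  exact dvd_sub_pow_of_dvd_sub h k

theorem Fintype.sum_eq_zero_of_comp_equiv_eq_mul {α R : Type*} [Fintype α] [CommRing R]
    {f : α → R} (σ : α ≃ α) {c : R} (hc : IsUnit (c - 1)) (hf : ∀ x, f (σ x) = c * f x) :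
    ∑ x, f x = 0 := by
  have h : (c - 1) * ∑ x, f x = 0 := by
    rw [sub_mul, one_mul, mul_sum, ← Equiv.sum_comp σ f]
    simp only [hf, sub_self]
  exact hc.mul_right_eq_zero.mp h

namespace ZMod

theorem sum_Ico_natCast {M : Type*} [AddCommMonoid M] {q : ℕ} [NeZero q] (f : ZMod q → M)
    (m : ℕ) : ∑ i ∈ Ico m (m + q), f i = ∑ x, f x := by
  calc ∑ i ∈ Ico m (m + q), f i
      = (((Multiset.Ico m (m + q)).map (· % q)).map (fun i : ℕ => f i)).sum := by
        simp only [Multiset.map_map, Function.comp_def, natCast_mod]; rfl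
    _ = ∑ i ∈ range q, f i := by rw [Nat.multiset_Ico_map_mod]; rfl
    _ = ∑ x, f x := by
        refine sum_nbij' (fun i => i) val (fun _ _ => mem_univ _)
          (fun x _ => mem_range.mpr x.val_lt) (fun i hi => val_cast_of_lt (mem_range.mp hi))
          (fun x _ => natCast_zmod_val x) (fun _ _ => rfl)

theorem exists_unit_pow_ne_one {p n : ℕ} [Fact p.Prime] (hn : ¬ p - 1 ∣ n) :
    ∃ g : (ZMod p)ˣ, g ^ n ≠ 1 := by
  by_contra! h
  rw [← card_units p, ← Nat.card_eq_fintype_card, ← IsCyclic.exponent_eq_card] at hn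
  exact hn (Monoid.exponent_dvd_of_forall_pow_eq_one h)

theorem isUnit_iff_castHom_ne_zero {p d : ℕ} [Fact p.Prime] (x : ZMod (p ^ (d + 1))) :
    IsUnit x ↔ castHom (dvd_pow_self p d.succ_ne_zero) (ZMod p) x ≠ 0 := by
  rw [← natCast_zmod_val x, isUnit_natCast_iff_not_dvd_pow Fact.out d.succ_pos, map_natCast,
    Ne, natCast_eq_zero_iff]

end ZMod

def powLift (q k n : ℕ) (x : ZMod q) : ZMod (q ^ (k + 1)) := (x.val : ZMod (q ^ (k + 1))) ^ n

section PowerSums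

variable {q k n : ℕ}

theorem powLift_natCast (hn : q ^ k ∣ n) (i : ℕ) :
    powLift q k n i = (i : ZMod (q ^ (k + 1))) ^ n := by
  rw [powLift, ← Nat.cast_pow, ← Nat.cast_pow, ZMod.natCast_eq_natCast_iff]
  refine Nat.ModEq.pow_of_prime_pow_dvd hn ?_
  rw [ZMod.val_natCast]
  exact Nat.mod_modEq i q

theorem powLift_mul [NeZero q] (hn : q ^ k ∣ n) (x y : ZMod q) :
    powLift q k n (x * y) = powLift q k n x * powLift q k n y := by
  conv_lhs => rw [← ZMod.natCast_zmod_val x, ← ZMod.natCast_zmod_val y, ← Nat.cast_mul,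
    powLift_natCast hn]
  rw [Nat.cast_mul, mul_pow, powLift, powLift]

theorem sum_powLift_eq_zero [Fact q.Prime] (hn : q ^ k ∣ n) (hnd : ¬ q - 1 ∣ n) :
    ∑ x, powLift q k n x = 0 := by
  obtain ⟨g, hg⟩ := ZMod.exists_unit_pow_ne_one hnd
  refine Fintype.sum_eq_zero_of_comp_equiv_eq_mul (Equiv.mulLeft₀ (g : ZMod q) g.ne_zero) ?_
    fun x => powLift_mul hn _ x
  rw [ZMod.isUnit_iff_castHom_ne_zero, map_sub, map_one, powLift, map_pow, map_natCast,
    ZMod.natCast_zmod_val, sub_ne_zero]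
  exact fun h => hg (Units.ext (by simpa using h))

theorem S_add (n m l : ℕ) : S n (m + l) = S n m + ∑ i ∈ Ico (m + 1) (m + 1 + l), i ^ n := by
  rw [S, S, ← Ico_add_one_right_eq_Icc, ← Ico_add_one_right_eq_Icc,
    sum_Ico_consecutive _ (by omega) (by omega)]
  ring_nf

theorem S_add_modEq [Fact q.Prime] (hn : q ^ k ∣ n) (hnd : ¬ q - 1 ∣ n) (m : ℕ) :
    S n (m + q) ≡ S n m [MOD q ^ (k + 1)] := by
  rw [← ZMod.natCast_eq_natCast_iff, S_add, Nat.cast_add, add_eq_left, Nat.cast_sum]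
  simp only [Nat.cast_pow, ← powLift_natCast hn]
  rw [ZMod.sum_Ico_natCast, sum_powLift_eq_zero hn hnd]

end PowerSums

theorem stmt15_general (q a n : ℕ) (hq : q.Prime) (ha : 1 ≤ a)
    (hnd : ¬ (q - 1 ∣ n)) (hdvd : q ^ (a - 1) ∣ n) :
    (∀ m, 1 ≤ m → S n (m + q) ≡ S n m [MOD q ^ a]) ∧
    ¬ S n q ≡ S n 1 [MOD q ^ a] := by
  have := Fact.mk hq
  obtain ⟨k, rfl⟩ := Nat.exists_eq_add_of_le' ha
  rw [Nat.add_sub_cancel] at hdvd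
  have hper (m : ℕ) := S_add_modEq hdvd hnd m
  refine ⟨fun m _ => hper m, fun h => ?_⟩
  have hq0 : S n q ≡ S n 0 [MOD q ^ (k + 1)] := by simpa using hper 0
  have h1 : 1 ≡ 0 [MOD q ^ (k + 1)] := by
    simpa [S] using h.symm.trans hq0
  rw [Nat.modEq_zero_iff_dvd, Nat.dvd_one] at h1
  exact (Nat.one_lt_pow k.succ_ne_zero hq.one_lt).ne' h1

theorem stmt15 (q a n : ℕ) (hq : q.Prime) (hodd : Odd q) (ha : 1 ≤ a) (hn : 1 ≤ n)
    (hnd : ¬ (q - 1 ∣ n)) (hdvd : q ^ (a - 1) ∣ n) :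
    (∀ m, 1 ≤ m → S n (m + q) ≡ S n m [MOD q ^ a]) ∧
    ¬ S n q ≡ S n 1 [MOD q ^ a] :=
  stmt15_general q a n hq ha hnd hdvd
end
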